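/- arXiv:2009.03406 — 3 statements merged into one kernel-verified Lean document; each statement's English description precedes it below -/
import Mathlib

section
/- Let n ∈ ℕ, let ε : Fin n → Bool be a function (recording for each index whether the corresponding crossing is positive), and for v ⋖ v' differing in coordinate i define m(v,v') to be the number of indices j < i such that either v_j = 1 and ε(j) = true, or v_j = 0 and ε(j) = false. Then for every square of the cube, i.e. for all v, v₁', v₂', v'' ∈ {0,1}^n with v ⋖ v₁' ⋖ v'', v ⋖ v₂' ⋖ v'', and v₁' ≠ v₂', one has m(v,v₁') + m(v₁',v'') ≢ m(v,v₂') + m(v₂',v'') (mod 2). -/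
/-- `v'` is an immediate successor of `v` in the cube `{0,1}^n`, differing in coordinate `i`:
the `i`-th coordinate changes from `0` to `1` and all other coordinates agree. -/
def IsSucc {n : ℕ} (v v' : Fin n → ZMod 2) (i : Fin n) : Prop :=
  v i = 0 ∧ v' i = 1 ∧ ∀ j : Fin n, j ≠ i → v j = v' j

/-- `m(v, v')` for the edge starting at `v` in direction `i`: the number of indices `j < i`
such that either `v j = 1` and the crossing `j` is positive (`ε j = true`), or `v j = 0` and
the crossing `j` is negative (`ε j = false`). -/
def signCount {n : ℕ} (ε : Fin n → Bool) (v : Fin n → ZMod 2) (i : Fin n) : ℕ :=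
  (Finset.univ.filter fun j : Fin n =>
    j < i ∧ ((v j = 1 ∧ ε j = true) ∨ (v j = 0 ∧ ε j = false))).card

/-!
Let the square have directions `i < k`. The count `m(v + eₖ, v'')` of the edge in direction `i`
only looks at coordinates below `i < k`, so it equals `m(v, v + eᵢ)`. The count `m(v + eᵢ, v'')`
of the edge in direction `k` sees coordinate `i` changed from `0` to `1`, which toggles exactly
one of its two conditions, so `m(v + eᵢ, v'') ≡ m(v, v + eₖ) + 1 (mod 2)`.
-/

theorem Finset.natCast_card_filter_eq_add_one {α : Type*} [DecidableEq α] {s : Finset α}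
    {p q : α → Prop} [DecidablePred p] [DecidablePred q] {i : α} (hi : i ∈ s)
    (hpq : ∀ j ∈ s, j ≠ i → (p j ↔ q j)) (hpi : p i ↔ ¬q i) :
    ((s.filter p).card : ZMod 2) = (s.filter q).card + 1 := by
  simp only [Finset.natCast_card_filter]
  rw [← Finset.add_sum_erase s _ hi, ← Finset.add_sum_erase s _ hi,
    Finset.sum_congr rfl fun j hj => if_congr (hpq j (Finset.mem_of_mem_erase hj)
      (Finset.ne_of_mem_erase hj)) rfl rfl]
  by_cases hq : q i
  · simp only [hpi, hq, not_true, if_true, if_false]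
    linear_combination (-1 : ZMod 2) * ZMod.natCast_self 2
  · simp only [hpi, hq, not_false_iff, if_true, if_false]
    ring

namespace IsSucc

variable {n : ℕ} {v v' : Fin n → ZMod 2} {i : Fin n}

theorem eq_update (h : IsSucc v v' i) : v' = Function.update v i 1 := by
  funext j
  rcases eq_or_ne j i with rfl | hj
  · simp [h.2.1]
  · simp [hj, h.2.2 j hj]

theorem apply_eq_one (h : IsSucc v v' i) {j : Fin n} (hj : v j = 1) : v' j = 1 := by
  rcases eq_or_ne j i with rfl | hji
  · exact h.2.1
  · rw [← h.2.2 j hji, hj]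

theorem eq_of_apply_ne (h : IsSucc v v' i) {j : Fin n} (hj : v j ≠ v' j) : j = i :=
  by_contra fun hji => hj (h.2.2 j hji)

theorem snd_eq_of_square {v₁' v₂' v'' : Fin n → ZMod 2} {i₁ j₁ i₂ j₂ : Fin n}
    (h₁ : IsSucc v v₁' i₁) (h₂ : IsSucc v₁' v'' j₁) (h₃ : IsSucc v v₂' i₂)
    (h₄ : IsSucc v₂' v'' j₂) (hi : i₁ ≠ i₂) : j₁ = i₂ := by
  refine (h₂.eq_of_apply_ne ?_).symm
  rw [← h₁.2.2 i₂ hi.symm, h₃.1, h₄.apply_eq_one h₃.2.1]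
  exact zero_ne_one

variable (ε : Fin n → Bool) {k : Fin n}

theorem signCount_of_le (h : IsSucc v v' i) (hki : k ≤ i) :
    signCount ε v' k = signCount ε v k := by
  unfold signCount
  congr 1
  refine Finset.filter_congr fun j _ => and_congr_right fun hjk => ?_
  rw [h.2.2 j (hjk.trans_le hki).ne]

theorem natCast_signCount_of_lt (h : IsSucc v v' i) (hik : i < k) :
    (signCount ε v' k : ZMod 2) = signCount ε v k + 1 := by
  refine Finset.natCast_card_filter_eq_add_one (Finset.mem_univ i)
    (fun j _ hj => by rw [h.2.2 j hj]) ?_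
  cases ε i <;> simp [h.1, h.2.1, hik]

end IsSucc

theorem signCount_square_of_lt {n : ℕ} (ε : Fin n → Bool) {v v₁' v₂' : Fin n → ZMod 2}
    {i k : Fin n} (hik : i < k) (h₁ : IsSucc v v₁' i) (h₂ : IsSucc v v₂' k) :
    ((signCount ε v i + signCount ε v₁' k : ℕ) : ZMod 2) =
      ((signCount ε v k + signCount ε v₂' i : ℕ) : ZMod 2) + 1 := by
  push_cast
  rw [h₁.natCast_signCount_of_lt ε hik, h₂.signCount_of_le ε hik.le]
  ring

theorem stmt_0 {n : ℕ} (ε : Fin n → Bool) (v v₁' v₂' v'' : Fin n → ZMod 2)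
    (i₁ j₁ i₂ j₂ : Fin n)
    (h₁ : IsSucc v v₁' i₁) (h₂ : IsSucc v₁' v'' j₁)
    (h₃ : IsSucc v v₂' i₂) (h₄ : IsSucc v₂' v'' j₂)
    (hne : v₁' ≠ v₂') :
    ((signCount ε v i₁ + signCount ε v₁' j₁ : ℕ) : ZMod 2) ≠
      ((signCount ε v i₂ + signCount ε v₂' j₂ : ℕ) : ZMod 2) := by
  have hi : i₁ ≠ i₂ := by
    rintro rfl
    exact hne (h₁.eq_update.trans h₃.eq_update.symm)
  obtain rfl := IsSucc.snd_eq_of_square h₁ h₂ h₃ h₄ hi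
  obtain rfl := IsSucc.snd_eq_of_square h₃ h₄ h₁ h₂ hi.symm
  rcases hi.lt_or_gt with hlt | hgt
  · rw [signCount_square_of_lt ε hlt h₁ h₃]
    exact add_ne_left.mpr one_ne_zero
  · rw [signCount_square_of_lt ε hgt h₃ h₁]
    exact (add_ne_left.mpr one_ne_zero).symm
end

section
/- Let n ∈ ℕ and let m and m' be two sign assignments on the n-cube. Then there exists a function φ : {0,1}^n → ZMod 2 such that for every pair v ⋖ v', one has m'(v,v') = m(v,v') + φ(v) + φ(v') in ZMod 2. -/
/-- A sign assignment on the `n`-cube: a `ZMod 2`-valued function on edges (recorded as a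
function on all pairs of vertices, used only on immediate successor pairs) such that the sum
over the four edges of every square equals `1`. -/
def SignAssignment {n : ℕ} (m : (Fin n → ZMod 2) → (Fin n → ZMod 2) → ZMod 2) : Prop :=
  ∀ (v v₁' v₂' v'' : Fin n → ZMod 2) (i₁ j₁ i₂ j₂ : Fin n),
    IsSucc v v₁' i₁ → IsSucc v₁' v'' j₁ → IsSucc v v₂' i₂ → IsSucc v₂' v'' j₂ →
    v₁' ≠ v₂' →
    m v v₁' + m v₁' v'' + m v v₂' + m v₂' v'' = 1


/-!
A sign assignment `m` turns the sum around every square into `1`, so the difference `d = m' - m`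
of two sign assignments sums to `0` around every square: `d` is a closed `1`-cochain on the cube.
The cube is simply connected by its squares, so `d` is exact. Concretely, let `φ v` be the sum
of `d` along the monotone path from `0` to `v` that switches on the coordinates of `v` in
increasing order. For an edge `v ⋖ v'` in direction `i`, the paths to `v` and to `v'` agree
before step `i`, and after it they run in parallel along the edges of squares; closedness on
these squares telescopes to `φ v' - φ v = d v v'`.
-/

open Finset

section

variable {n : ℕ}

def IsClosedOnSquares {G : Type*} [AddCommGroup G]
    (d : (Fin n → ZMod 2) → (Fin n → ZMod 2) → G) : Prop :=
  ∀ (v v₁' v₂' v'' : Fin n → ZMod 2) (i₁ j₁ i₂ j₂ : Fin n),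
    IsSucc v v₁' i₁ → IsSucc v₁' v'' j₁ → IsSucc v v₂' i₂ → IsSucc v₂' v'' j₂ →
    v₁' ≠ v₂' →
    d v v₁' + d v₁' v'' = d v v₂' + d v₂' v''

theorem SignAssignment.isClosedOnSquares_sub {m m' : (Fin n → ZMod 2) → (Fin n → ZMod 2) → ZMod 2}
    (hm : SignAssignment m) (hm' : SignAssignment m') :
    IsClosedOnSquares fun v v' => m' v v' - m v v' := by
  intro v v₁' v₂' v'' i₁ j₁ i₂ j₂ h₁ h₂ h₃ h₄ hne
  have hsum := hm v v₁' v₂' v'' i₁ j₁ i₂ j₂ h₁ h₂ h₃ h₄ hne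
  have hsum' := hm' v v₁' v₂' v'' i₁ j₁ i₂ j₂ h₁ h₂ h₃ h₄ hne
  linear_combination (norm := ring_nf) hsum' - hsum
  reduce_mod_char

/-- `truncate v 0, …, truncate v n = v` is the monotone path from `0` to `v`, standing still at
the steps `k` with `v k = 0`. -/
def truncate (v : Fin n → ZMod 2) (k : ℕ) : Fin n → ZMod 2 :=
  fun j => if (j : ℕ) < k then v j else 0

@[simp]
theorem truncate_self (v : Fin n → ZMod 2) : truncate v n = v := by
  funext j; simp [truncate]

theorem truncate_succ_of_eq_zero (v : Fin n → ZMod 2) {k : ℕ} (hk : k < n)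
    (hv : v ⟨k, hk⟩ = 0) : truncate v (k + 1) = truncate v k := by
  funext j
  simp only [truncate]
  rcases lt_trichotomy (j : ℕ) k with h | rfl | h
  · simp [h, Nat.lt_succ_of_lt h]
  · simp [hv]
  · simp [h.not_gt, (Nat.succ_le_of_lt h).not_gt]

theorem isSucc_truncate_succ (v : Fin n → ZMod 2) {k : ℕ} (hk : k < n)
    (hv : v ⟨k, hk⟩ = 1) : IsSucc (truncate v k) (truncate v (k + 1)) ⟨k, hk⟩ := by
  refine ⟨by simp [truncate], by simpa [truncate] using hv, fun j hj => ?_⟩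
  have hjk : (j : ℕ) ≠ k := fun h => hj (Fin.ext h)
  simp only [truncate]
  split_ifs <;> first | rfl | omega

namespace IsSucc

variable {v v' : Fin n → ZMod 2} {i : Fin n}

theorem ne (h : IsSucc v v' i) : v ≠ v' := by
  intro he
  have := h.2.1
  rw [← he, h.1] at this
  exact zero_ne_one this

theorem truncate_eq (h : IsSucc v v' i) {k : ℕ} (hk : k ≤ i) : truncate v k = truncate v' k := by
  funext j
  simp only [truncate]
  split_ifs with hj
  · exact h.2.2 j (fun hji => by omega)
  · rfl

theorem truncate (h : IsSucc v v' i) {k : ℕ} (hk : i < k) :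
    IsSucc (truncate v k) (truncate v' k) i := by
  refine ⟨by simpa [_root_.truncate, hk] using h.1, by simpa [_root_.truncate, hk] using h.2.1,
    fun j hj => ?_⟩
  simp only [_root_.truncate]
  split_ifs
  · exact h.2.2 j hj
  · rfl

end IsSucc

section Potential

variable {G : Type*} [AddCommGroup G] {d : (Fin n → ZMod 2) → (Fin n → ZMod 2) → G}

def zeroOnDiag (d : (Fin n → ZMod 2) → (Fin n → ZMod 2) → G) (v v' : Fin n → ZMod 2) : G :=
  if v = v' then 0 else d v v'

@[simp]
theorem zeroOnDiag_self (v : Fin n → ZMod 2) : zeroOnDiag d v v = 0 := if_pos rfl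

theorem zeroOnDiag_of_isSucc {v v' : Fin n → ZMod 2} {i : Fin n} (h : IsSucc v v' i) :
    zeroOnDiag d v v' = d v v' := if_neg h.ne

def pathPotential (d : (Fin n → ZMod 2) → (Fin n → ZMod 2) → G) (v : Fin n → ZMod 2) : G :=
  ∑ k ∈ range n, zeroOnDiag d (truncate v k) (truncate v (k + 1))

/-- Step `k` of the paths to the two ends of an edge `v ⋖ v'`, together with the rungs joining
them, is a (possibly degenerate) square. -/
theorem IsClosedOnSquares.zeroOnDiag_truncate_square (hd : IsClosedOnSquares d)
    {v v' : Fin n → ZMod 2} {i : Fin n} (h : IsSucc v v' i) {k : ℕ} (hk : k < n) :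
    zeroOnDiag d (truncate v k) (truncate v (k + 1)) +
        zeroOnDiag d (truncate v (k + 1)) (truncate v' (k + 1)) =
      zeroOnDiag d (truncate v k) (truncate v' k) +
        zeroOnDiag d (truncate v' k) (truncate v' (k + 1)) := by
  rcases lt_trichotomy k i with hki | rfl | hik
  · rw [h.truncate_eq hki.le, h.truncate_eq hki]
    simp [add_comm]
  · rw [truncate_succ_of_eq_zero v hk h.1, h.truncate_eq le_rfl]
  · have hvk : v ⟨k, hk⟩ = v' ⟨k, hk⟩ := h.2.2 _ (fun he => hik.ne' (congrArg Fin.val he))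
    obtain hv | hv : v ⟨k, hk⟩ = 0 ∨ v ⟨k, hk⟩ = 1 := by
      generalize v ⟨k, hk⟩ = x; revert x; decide
    · rw [truncate_succ_of_eq_zero v hk hv, truncate_succ_of_eq_zero v' hk (hvk ▸ hv)]
      simp [add_comm]
    · have hstep := isSucc_truncate_succ v hk hv
      have hstep' := isSucc_truncate_succ v' hk (hvk ▸ hv)
      have hrung := h.truncate hik
      have hrung' := h.truncate (Nat.lt_succ_of_lt hik)
      rw [zeroOnDiag_of_isSucc hstep, zeroOnDiag_of_isSucc hstep', zeroOnDiag_of_isSucc hrung,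
        zeroOnDiag_of_isSucc hrung']
      refine hd _ _ _ _ _ _ _ _ hstep hrung' hrung hstep' fun he => ?_
      have := congrFun he i
      simp [truncate, hik, Nat.lt_succ_of_lt hik, h.1, h.2.1] at this

theorem IsClosedOnSquares.pathPotential_sub (hd : IsClosedOnSquares d)
    {v v' : Fin n → ZMod 2} {i : Fin n} (h : IsSucc v v' i) :
    pathPotential d v' - pathPotential d v = d v v' := by
  calc pathPotential d v' - pathPotential d v
      = ∑ k ∈ range n, (zeroOnDiag d (truncate v (k + 1)) (truncate v' (k + 1)) -
          zeroOnDiag d (truncate v k) (truncate v' k)) := by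
        rw [pathPotential, pathPotential, ← sum_sub_distrib]
        refine sum_congr rfl fun k hk => ?_
        rw [sub_eq_sub_iff_add_eq_add, add_comm,
          ← hd.zeroOnDiag_truncate_square h (mem_range.1 hk), add_comm]
    _ = d v v' := by
        rw [sum_range_sub (fun k => zeroOnDiag d (truncate v k) (truncate v' k)),
          truncate_self, truncate_self, zeroOnDiag_of_isSucc h, h.truncate_eq (Nat.zero_le _)]
        simp

end Potential

end

theorem stmt_2 {n : ℕ} (m m' : (Fin n → ZMod 2) → (Fin n → ZMod 2) → ZMod 2)
    (hm : SignAssignment m) (hm' : SignAssignment m') :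
    ∃ φ : (Fin n → ZMod 2) → ZMod 2,
      ∀ (v v' : Fin n → ZMod 2) (i : Fin n), IsSucc v v' i →
        m' v v' = m v v' + φ v + φ v' := by
  refine ⟨pathPotential fun v v' => m' v v' - m v v', fun v v' i h => ?_⟩
  have hφ := (hm.isClosedOnSquares_sub hm').pathPotential_sub h
  rw [eq_comm, sub_eq_iff_eq_add, CharTwo.sub_eq_add] at hφ
  rw [hφ]
  ring
end

section
/- Let Ω and Ω' be cochain complexes of R-modules, both simple, and let f, g : Ω → Ω' be homotopy equivalences. Then f and g are chain homotopic up to multiplication by a unit: there exists a unit u ∈ Rˣ such that f is chain homotopic to u • g. -/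
/-!
Write `f⁻¹`, `g⁻¹` for homotopy inverses. Simplicity of `Ω` gives `f ≫ g⁻¹ ≃ r` and
`g ≫ f⁻¹ ≃ t`; their composite is homotopic both to `r * t` and, since `g⁻¹ ≫ g ≃ 1`, to
`f ≫ f⁻¹ ≃ 1`, so uniqueness of the scalar forces `r * t = 1`. Composing `f ≫ g⁻¹ ≃ r` with `g`
then gives `f ≃ r • g`.
-/

open CategoryTheory

variable {R : Type} [CommRing R]

/-- A cochain complex `Ω` of `R`-modules is *simple* if every chain map `e : Ω ⟶ Ω` is chain
homotopic to a unique scalar multiple of the identity. -/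
def IsSimpleComplex (Ω : CochainComplex (ModuleCat R) ℤ) : Prop :=
  ∀ e : Ω ⟶ Ω, ∃! r : R, Nonempty (Homotopy e (r • 𝟙 Ω))

namespace HomotopyEquiv

variable {ι V : Type*} [Category V] [Preadditive V] {c : ComplexShape ι}
  {C D : HomologicalComplex V c}

def homotopyHomInvHomInvId (f g : HomotopyEquiv C D) :
    Homotopy ((f.hom ≫ g.inv) ≫ (g.hom ≫ f.inv)) (𝟙 C) :=
  (Homotopy.ofEq (by simp only [Category.assoc])).trans
    (((g.homotopyInvHomId.compRightId f.inv).compLeft f.hom).trans f.homotopyHomInvId)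

def homotopyHomSmulOfHomInv [Linear R V] (f g : HomotopyEquiv C D) {r : R}
    (h : Homotopy (f.hom ≫ g.inv) (r • 𝟙 C)) : Homotopy f.hom (r • g.hom) :=
  (g.homotopyInvHomId.compLeftId f.hom).symm.trans <|
    (Homotopy.ofEq (Category.assoc _ _ _).symm).trans <|
      (h.compRight g.hom).trans (Homotopy.ofEq (by rw [Linear.smul_comp, Category.id_comp]))

end HomotopyEquiv

namespace Homotopy

variable {ι V : Type*} [Category V] [Preadditive V] [Linear R V] {c : ComplexShape ι}
  {C : HomologicalComplex V c}

def compSmulId {a b : C ⟶ C} {r t : R} (ha : Homotopy a (r • 𝟙 C)) (hb : Homotopy b (t • 𝟙 C)) :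
    Homotopy (a ≫ b) ((r * t) • 𝟙 C) :=
  (ha.comp hb).trans (Homotopy.ofEq (by rw [Linear.smul_comp, Linear.comp_smul,
    Category.id_comp, smul_smul]))

end Homotopy

theorem IsSimpleComplex.eq_of_homotopy {Ω : CochainComplex (ModuleCat R) ℤ}
    (hΩ : IsSimpleComplex Ω) {e : Ω ⟶ Ω} {r s : R}
    (hr : Homotopy e (r • 𝟙 Ω)) (hs : Homotopy e (s • 𝟙 Ω)) : r = s :=
  (hΩ e).unique ⟨hr⟩ ⟨hs⟩

theorem stmt_12_general (Ω Ω' : CochainComplex (ModuleCat R) ℤ)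
    (hΩ : IsSimpleComplex Ω)
    (f g : HomotopyEquiv Ω Ω') :
    ∃ u : Rˣ, Nonempty (Homotopy f.hom ((u : R) • g.hom)) := by
  obtain ⟨r, ⟨hr⟩, -⟩ := hΩ (f.hom ≫ g.inv)
  obtain ⟨t, ⟨ht⟩, -⟩ := hΩ (g.hom ≫ f.inv)
  have hrt : r * t = 1 :=
    hΩ.eq_of_homotopy (hr.compSmulId ht)
      ((f.homotopyHomInvHomInvId g).trans (Homotopy.ofEq (one_smul R _).symm))
  exact ⟨Units.mkOfMulEqOne r t hrt, ⟨f.homotopyHomSmulOfHomInv g hr⟩⟩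

theorem stmt_12 (Ω Ω' : CochainComplex (ModuleCat R) ℤ)
    (hΩ : IsSimpleComplex Ω) (hΩ' : IsSimpleComplex Ω')
    (f g : HomotopyEquiv Ω Ω') :
    ∃ u : Rˣ, Nonempty (Homotopy f.hom ((u : R) • g.hom)) :=
  stmt_12_general Ω Ω' hΩ f g
end
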